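/- (Corollary 1: equal-time ACF of the time-variant MC channel.) For all V > 0, D₁ > 0, D₂ > 0, τ > 0, t₁ > 0 and every r₀ ∈ ℝ³ with ‖r₀‖ = x₀, the second moment of the channel impulse response satisfies φ(t₁,t₁) = ∫_{ℝ³} [V·(4πD₁τ)^{-3/2}·exp(−‖r‖²/(4D₁τ))]² · (4πD₂t₁)^{-3/2}·exp(−‖r − r₀‖²/(4D₂t₁)) dr = V²·exp(−x₀²/(2(D₁τ + 2D₂t₁))) / [(4πD₁τ)^{3/2}·(4π(D₁τ + 2D₂t₁))^{3/2}]. -/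

import Mathlib

open MeasureTheory Real

/-! The impulse response is `V • G_{D₁τ}` and the density of the distance vector is
`G_{D₂t₁}(· - r₀)`, where `G_t` is the heat kernel. Squaring a heat kernel halves its time up to a
constant, `G_t ^ 2 = (8πt)^(-3/2) G_{t/2}`, and heat kernels form a convolution semigroup,
`∫ G_s(r) G_t(r - r₀) dr = G_{s+t}(r₀)` (complete the square, then use the Gaussian integral).
Hence `φ(t₁,t₁) = V² (8πD₁τ)^(-3/2) G_{D₁τ/2 + D₂t₁}(r₀)`. -/

noncomputable def heatKernel (E : Type*) [NormedAddCommGroup E] [InnerProductSpace ℝ E] (t : ℝ)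
    (x : E) : ℝ :=
  (4 * π * t) ^ (-(Module.finrank ℝ E : ℝ) / 2) * exp (-‖x‖ ^ 2 / (4 * t))

variable {E : Type*} [NormedAddCommGroup E] [InnerProductSpace ℝ E]

theorem heatKernel_sq {t : ℝ} (ht : 0 < t) (x : E) :
    heatKernel E t x ^ 2 =
      (8 * π * t) ^ (-(Module.finrank ℝ E : ℝ) / 2) * heatKernel E (t / 2) x := by
  have hπ := pi_pos
  rw [heatKernel, heatKernel, mul_pow, ← mul_assoc, ← mul_rpow (by positivity) (by positivity),
    show 8 * π * t * (4 * π * (t / 2)) = (4 * π * t) ^ 2 by ring,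
    ← rpow_mul_natCast (by positivity), ← rpow_natCast_mul (by positivity), ← exp_nat_mul]
  congr 2 <;> push_cast <;> ring

theorem exp_neg_sq_norm_mul_exp_neg_sq_norm_sub {s t : ℝ} (hs : 0 < s) (ht : 0 < t) (x y : E) :
    exp (-‖x‖ ^ 2 / (4 * s)) * exp (-‖x - y‖ ^ 2 / (4 * t)) =
      exp (-‖y‖ ^ 2 / (4 * (s + t))) *
        exp (-((s + t) / (4 * s * t)) * ‖x - (s / (s + t)) • y‖ ^ 2) := by
  rw [← exp_add, ← exp_add]
  congr 1
  rw [norm_sub_sq_real, norm_sub_sq_real, norm_smul, real_inner_smul_right, norm_div,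
    Real.norm_of_nonneg hs.le, Real.norm_of_nonneg (by positivity : (0:ℝ) ≤ s + t)]
  field_simp
  ring

theorem integral_heatKernel_mul_heatKernel_sub [FiniteDimensional ℝ E] [MeasurableSpace E]
    [BorelSpace E] {s t : ℝ} (hs : 0 < s) (ht : 0 < t) (y : E) :
    ∫ x, heatKernel E s x * heatKernel E t (x - y) = heatKernel E (s + t) y := by
  have hπ := pi_pos
  have hvar : 0 < (s + t) / (4 * s * t) := by positivity
  simp only [heatKernel]
  simp_rw [mul_mul_mul_comm _ (exp _), exp_neg_sq_norm_mul_exp_neg_sq_norm_sub hs ht,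
    integral_const_mul,
    integral_sub_right_eq_self (fun x : E ↦ exp (-((s + t) / (4 * s * t)) * ‖x‖ ^ 2)),
    GaussianFourier.integral_rexp_neg_mul_sq_norm hvar, neg_div]
  generalize (Module.finrank ℝ E : ℝ) / 2 = p
  have hconst : (4 * π * s) ^ (-p) * (4 * π * t) ^ (-p) * (π / ((s + t) / (4 * s * t))) ^ p =
      (4 * π * (s + t)) ^ (-p) := by
    rw [show π / ((s + t) / (4 * s * t)) = 4 * π * s * (4 * π * t) / (4 * π * (s + t)) by
        field_simp,
      rpow_neg (by positivity), rpow_neg (by positivity), rpow_neg (by positivity),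
      div_rpow (by positivity) (by positivity), mul_rpow (x := 4 * π * s) (by positivity)
        (by positivity)]
    have ha : (4 * π * s) ^ p ≠ 0 := by positivity
    have hb : (4 * π * t) ^ p ≠ 0 := by positivity
    generalize (4 * π * s) ^ p = a at *
    generalize (4 * π * t) ^ p = b at *
    field_simp
  rw [← hconst]
  ring

theorem equal_time_acf_of_time_variant_MC_channel_general (V D₁ D₂ τ t₁ x₀ : ℝ)
    (hD₁ : 0 < D₁) (hD₂ : 0 < D₂) (hτ : 0 < τ) (ht₁ : 0 < t₁)
    (r₀ : EuclideanSpace ℝ (Fin 3)) (hr₀ : ‖r₀‖ = x₀) :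
    (∫ r : EuclideanSpace ℝ (Fin 3),
        (V * (4 * π * D₁ * τ) ^ (-(3 : ℝ) / 2) *
            Real.exp (-‖r‖ ^ 2 / (4 * D₁ * τ))) ^ 2 *
        ((4 * π * D₂ * t₁) ^ (-(3 : ℝ) / 2) *
            Real.exp (-‖r - r₀‖ ^ 2 / (4 * D₂ * t₁))))
      = V ^ 2 * Real.exp (-x₀ ^ 2 / (2 * (D₁ * τ + 2 * D₂ * t₁))) /
          ((4 * π * D₁ * τ) ^ ((3 : ℝ) / 2) *
            (4 * π * (D₁ * τ + 2 * D₂ * t₁)) ^ ((3 : ℝ) / 2)) := by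
  have hπ := pi_pos
  have hA : 0 < D₁ * τ := by positivity
  have hB : 0 < D₂ * t₁ := by positivity
  have hG (t : ℝ) (x : EuclideanSpace ℝ (Fin 3)) :
      heatKernel _ t x = (4 * π * t) ^ (-(3 : ℝ) / 2) * exp (-‖x‖ ^ 2 / (4 * t)) := by
    simp [heatKernel]
  have hsq (r : EuclideanSpace ℝ (Fin 3)) : (V * heatKernel _ (D₁ * τ) r) ^ 2 =
      V ^ 2 * (8 * π * (D₁ * τ)) ^ (-(3 : ℝ) / 2) * heatKernel _ (D₁ * τ / 2) r := by
    rw [mul_pow, heatKernel_sq hA, finrank_euclideanSpace_fin, Nat.cast_ofNat]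
    ring
  simp_rw [mul_assoc (4 * π), mul_assoc 4 D₁, mul_assoc 4 D₂, mul_assoc V, ← hG, hsq,
    mul_assoc (V ^ 2 * _), integral_const_mul,
    integral_heatKernel_mul_heatKernel_sub (half_pos hA) hB, hG, hr₀]
  rw [show 4 * (D₁ * τ / 2 + D₂ * t₁) = 2 * (D₁ * τ + 2 * D₂ * t₁) by ring, ← mul_assoc,
    mul_assoc _ ((8 * π * (D₁ * τ)) ^ _), ← mul_rpow (by positivity) (by positivity),
    show 8 * π * (D₁ * τ) * (4 * π * (D₁ * τ / 2 + D₂ * t₁)) =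
      4 * π * (D₁ * τ) * (4 * π * (D₁ * τ + 2 * D₂ * t₁)) by ring,
    mul_rpow (by positivity) (by positivity), neg_div, rpow_neg (by positivity),
    rpow_neg (by positivity)]
  ring

/-- Corollary 1 (equal-time ACF of the time-variant MC channel):
`φ(t₁,t₁) = ∫_{ℝ³} h(r)² f_{t₁}(r) dr
  = V² exp(−x₀²/(2(D₁τ + 2D₂t₁))) / ((4πD₁τ)^{3/2} (4π(D₁τ + 2D₂t₁))^{3/2})`. -/
theorem equal_time_acf_of_time_variant_MC_channel (V D₁ D₂ τ t₁ x₀ : ℝ)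
    (hV : 0 < V) (hD₁ : 0 < D₁) (hD₂ : 0 < D₂) (hτ : 0 < τ) (ht₁ : 0 < t₁)
    (r₀ : EuclideanSpace ℝ (Fin 3)) (hr₀ : ‖r₀‖ = x₀) :
    (∫ r : EuclideanSpace ℝ (Fin 3),
        (V * (4 * π * D₁ * τ) ^ (-(3 : ℝ) / 2) *
            Real.exp (-‖r‖ ^ 2 / (4 * D₁ * τ))) ^ 2 *
        ((4 * π * D₂ * t₁) ^ (-(3 : ℝ) / 2) *
            Real.exp (-‖r - r₀‖ ^ 2 / (4 * D₂ * t₁))))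
      = V ^ 2 * Real.exp (-x₀ ^ 2 / (2 * (D₁ * τ + 2 * D₂ * t₁))) /
          ((4 * π * D₁ * τ) ^ ((3 : ℝ) / 2) *
            (4 * π * (D₁ * τ + 2 * D₂ * t₁)) ^ ((3 : ℝ) / 2)) :=
  equal_time_acf_of_time_variant_MC_channel_general V D₁ D₂ τ t₁ x₀ hD₁ hD₂ hτ ht₁ r₀ hr₀
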